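/- Let G' be a connected graph, c a vertex of G' with degree 2 and incident edges e_1 = ac, e_2 = bc, and let G be obtained from G' by splitting off e_1 and e_2, i.e., deleting c and adding the edge ab. Then md(G) ≤ md(G'). -/

import Mathlib

/-- An MD-coloring: an edge-coloring such that every pair of distinct vertices is
separated by a monochromatic edge-cut (equivalently, by some color class). -/
def isMDColoring {V : Type*} (G : SimpleGraph V) (c : Sym2 V → ℕ) : Prop :=
  ∀ u v : V, u ≠ v → ∃ i : ℕ, ¬ (G.deleteEdges {e | c e = i}).Reachable u v

/-- The monochromatic disconnection number: the maximum number of colors used on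
edges over all MD-colorings. -/
noncomputable def mdNum {V : Type*} (G : SimpleGraph V) : ℕ :=
  sSup {n | ∃ c : Sym2 V → ℕ, isMDColoring G c ∧ (c '' G.edgeSet).ncard = n}

/-!
Given an MD-coloring `κ` of the split-off graph `G`, color `G'` by giving both edges at `c` the
color `κ(ab)` and every other edge its color in `G`. Both graphs then use the same set of colors.
Removing the color `κ(ab)` isolates `c`, so `c` is separated from every other vertex. Two vertices
`u, v ≠ c` are separated in `G` by some color `i`; a path avoiding `i` in `G'` passes through `c` only
along `a - c - b`, whose color is `κ(ab) ≠ i`, so replacing that detour by the edge `ab` gives a path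
avoiding `i` in `G`.
-/

theorem SimpleGraph.Reachable.map_of_forall_adj {V W : Type*} {H : SimpleGraph V}
    {K : SimpleGraph W} (f : V → W) (hf : ∀ x y, H.Adj x y → K.Reachable (f x) (f y))
    {u v : V} (h : H.Reachable u v) : K.Reachable (f u) (f v) := by
  rw [SimpleGraph.reachable_eq_reflTransGen] at h hf ⊢
  exact Relation.ReflTransGen.lift' f hf _ _ h

theorem SimpleGraph.adj_iff_of_neighborSet_eq_pair {V : Type*} {G : SimpleGraph V} {a b c w : V}
    (hN : G.neighborSet c = {a, b}) : G.Adj c w ↔ w = a ∨ w = b := by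
  rw [← G.mem_neighborSet, hN, Set.mem_insert_iff, Set.mem_singleton_iff]

section MDColoring

open SimpleGraph

variable {V W : Type*}

theorem isMDColoring_const (G : SimpleGraph V) (i : ℕ) : isMDColoring G fun _ => i :=
  fun _ _ huv => ⟨i, by simpa [reachable_bot] using huv⟩

theorem bddAbove_mdColorCounts [Finite V] (G : SimpleGraph V) :
    BddAbove {n | ∃ κ : Sym2 V → ℕ, isMDColoring G κ ∧ (κ '' G.edgeSet).ncard = n} := by
  refine ⟨Nat.card (Sym2 V), ?_⟩
  rintro _ ⟨κ, -, rfl⟩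
  exact (Set.ncard_image_le (Set.toFinite _)).trans (Set.ncard_le_card _)

theorem mdNum_le_mdNum_of_forall_isMDColoring [Finite W] {G : SimpleGraph V}
    {G' : SimpleGraph W}
    (h : ∀ κ, isMDColoring G κ →
      ∃ κ', isMDColoring G' κ' ∧ (κ' '' G'.edgeSet).ncard = (κ '' G.edgeSet).ncard) :
    mdNum G ≤ mdNum G' := by
  refine csSup_le_csSup (bddAbove_mdColorCounts G') ⟨_, _, isMDColoring_const G 0, rfl⟩ ?_
  rintro _ ⟨κ, hκ, rfl⟩
  obtain ⟨κ', hκ', hcard⟩ := h κ hκ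
  exact ⟨κ', hκ', hcard⟩

end MDColoring

section SplitOff

open SimpleGraph

variable {V : Type*} {c : V}

open Classical in
noncomputable def collapseTo (A : {x // x ≠ c}) (x : V) : {x // x ≠ c} :=
  if h : x = c then A else ⟨x, h⟩

theorem collapseTo_self (A : {x // x ≠ c}) : collapseTo A c = A := dif_pos rfl

theorem collapseTo_of_ne (A : {x // x ≠ c}) {x : V} (hx : x ≠ c) : collapseTo A x = ⟨x, hx⟩ :=
  dif_neg hx

open Classical in
noncomputable def splitOffColoring (κ : Sym2 {x // x ≠ c} → ℕ) (A B : {x // x ≠ c}) (e : Sym2 V) : ℕ :=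
  if c ∈ e then κ s(A, B) else κ (e.map (collapseTo A))

variable {κ : Sym2 {x // x ≠ c} → ℕ} {A B : {x // x ≠ c}}

theorem splitOffColoring_of_mem {e : Sym2 V} (he : c ∈ e) :
    splitOffColoring κ A B e = κ s(A, B) := if_pos he

theorem splitOffColoring_mk {x y : V} (hx : x ≠ c) (hy : y ≠ c) :
    splitOffColoring κ A B s(x, y) = κ s(⟨x, hx⟩, ⟨y, hy⟩) := by
  rw [splitOffColoring, if_neg (by simp [hx.symm, hy.symm]), Sym2.map_mk,
    collapseTo_of_ne A hx, collapseTo_of_ne A hy]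

variable {G' : SimpleGraph V} {G : SimpleGraph {x // x ≠ c}}

theorem image_splitOffColoring_edgeSet (hN : G'.neighborSet c = {A.1, B.1})
    (hG : ∀ x y, G.Adj x y ↔ G'.Adj x.1 y.1 ∨ (x.1 = A.1 ∧ y.1 = B.1) ∨ (x.1 = B.1 ∧ y.1 = A.1)) :
    splitOffColoring κ A B '' G'.edgeSet = κ '' G.edgeSet := by
  have hcA : G'.Adj c A.1 := (adj_iff_of_neighborSet_eq_pair hN).2 (Or.inl rfl)
  ext i
  constructor
  · rintro ⟨e, he, rfl⟩
    induction e using Sym2.ind with | _ x y => ?_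
    by_cases hc : c ∈ s(x, y)
    · exact ⟨s(A, B), (hG A B).2 (Or.inr (Or.inl ⟨rfl, rfl⟩)), (splitOffColoring_of_mem hc).symm⟩
    · obtain ⟨hx, hy⟩ : x ≠ c ∧ y ≠ c := by simpa [eq_comm] using hc
      exact ⟨s(⟨x, hx⟩, ⟨y, hy⟩), (hG _ _).2 (Or.inl he), (splitOffColoring_mk hx hy).symm⟩
  · rintro ⟨e, he, rfl⟩
    induction e using Sym2.ind with | _ x y => ?_
    rcases (hG x y).1 he with h | ⟨hx, hy⟩ | ⟨hx, hy⟩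
    · exact ⟨s(x.1, y.1), h, splitOffColoring_mk x.2 y.2⟩
    · obtain rfl := Subtype.ext hx
      obtain rfl := Subtype.ext hy
      exact ⟨s(x.1, c), hcA.symm, splitOffColoring_of_mem (Sym2.mem_mk_right _ _)⟩
    · obtain rfl := Subtype.ext hx
      obtain rfl := Subtype.ext hy
      exact ⟨s(y.1, c), hcA.symm, by rw [splitOffColoring_of_mem (Sym2.mem_mk_right _ _), Sym2.eq_swap]⟩

theorem reachable_collapseTo_of_adj (hN : G'.neighborSet c = {A.1, B.1})
    (hG : ∀ x y, G.Adj x y ↔ G'.Adj x.1 y.1 ∨ (x.1 = A.1 ∧ y.1 = B.1) ∨ (x.1 = B.1 ∧ y.1 = A.1))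
    {i : ℕ} {x y : V} (hxy : (G'.deleteEdges {e | splitOffColoring κ A B e = i}).Adj x y) :
    (G.deleteEdges {e | κ e = i}).Reachable (collapseTo A x) (collapseTo A y) := by
  have through_center : ∀ w, G'.Adj c w → splitOffColoring κ A B s(c, w) ≠ i →
      (G.deleteEdges {e | κ e = i}).Reachable (collapseTo A c) (collapseTo A w) := by
    intro w hw hcol
    rw [splitOffColoring_of_mem (Sym2.mem_mk_left _ _)] at hcol
    have hAB : (G.deleteEdges {e | κ e = i}).Adj A B :=
      deleteEdges_adj.2 ⟨(hG A B).2 (Or.inr (Or.inl ⟨rfl, rfl⟩)), hcol⟩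
    rw [collapseTo_self]
    rcases (adj_iff_of_neighborSet_eq_pair hN).1 hw with rfl | rfl
    · rw [collapseTo_of_ne A A.2]
    · rw [collapseTo_of_ne A B.2]
      exact hAB.reachable
  simp only [deleteEdges_adj, Set.mem_ofPred_eq] at hxy
  obtain ⟨hadj, hcol⟩ := hxy
  by_cases hx : x = c
  · subst x
    exact through_center y hadj hcol
  by_cases hy : y = c
  · subst y
    exact (through_center x hadj.symm (by rwa [Sym2.eq_swap])).symm
  rw [collapseTo_of_ne A hx, collapseTo_of_ne A hy]
  exact Adj.reachable <| deleteEdges_adj.2 ⟨(hG _ _).2 (Or.inl hadj), by rwa [splitOffColoring_mk hx hy] at hcol⟩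

theorem isMDColoring_splitOffColoring (hN : G'.neighborSet c = {A.1, B.1})
    (hG : ∀ x y, G.Adj x y ↔ G'.Adj x.1 y.1 ∨ (x.1 = A.1 ∧ y.1 = B.1) ∨ (x.1 = B.1 ∧ y.1 = A.1))
    (hκ : isMDColoring G κ) : isMDColoring G' (splitOffColoring κ A B) := by
  have isolated : ∀ v, v ≠ c →
      ¬ (G'.deleteEdges {e | splitOffColoring κ A B e = κ s(A, B)}).Reachable c v := by
    intro v hv hr
    obtain ⟨w, hw⟩ := hr.nonempty_neighborSet_left hv.symm
    exact (deleteEdges_adj.1 hw).2 (splitOffColoring_of_mem (Sym2.mem_mk_left _ _))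
  intro u v huv
  by_cases hu : u = c
  · subst u
    exact ⟨_, isolated v (Ne.symm huv)⟩
  by_cases hv : v = c
  · subst v
    exact ⟨_, fun hr => isolated u huv hr.symm⟩
  obtain ⟨i, hi⟩ := hκ ⟨u, hu⟩ ⟨v, hv⟩ fun h => huv (congrArg Subtype.val h)
  refine ⟨i, fun hr => hi ?_⟩
  simpa only [collapseTo_of_ne A hu, collapseTo_of_ne A hv] using
    hr.map_of_forall_adj (collapseTo A) fun _ _ => reachable_collapseTo_of_adj hN hG

end SplitOff

theorem splitOff_md_general {V : Type*} [Fintype V] (G' : SimpleGraph V)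
    (a b c : V) (hN : G'.neighborSet c = {a, b})
    (G : SimpleGraph {x : V // x ≠ c})
    (hG : ∀ x y : {x : V // x ≠ c}, G.Adj x y ↔
      G'.Adj x.1 y.1 ∨ (x.1 = a ∧ y.1 = b) ∨ (x.1 = b ∧ y.1 = a)) :
    mdNum G ≤ mdNum G' := by
  have hca : G'.Adj c a := (G'.adj_iff_of_neighborSet_eq_pair hN).2 (Or.inl rfl)
  have hcb : G'.Adj c b := (G'.adj_iff_of_neighborSet_eq_pair hN).2 (Or.inr rfl)
  refine mdNum_le_mdNum_of_forall_isMDColoring fun κ hκ =>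
    ⟨splitOffColoring κ ⟨a, hca.ne'⟩ ⟨b, hcb.ne'⟩, isMDColoring_splitOffColoring hN hG hκ,
      congrArg Set.ncard (image_splitOffColoring_edgeSet hN hG)⟩

theorem splitOff_md {V : Type*} [Fintype V] (G' : SimpleGraph V) (hG' : G'.Connected)
    (a b c : V) (hab : a ≠ b) (hN : G'.neighborSet c = {a, b})
    (G : SimpleGraph {x : V // x ≠ c})
    (hG : ∀ x y : {x : V // x ≠ c}, G.Adj x y ↔
      G'.Adj x.1 y.1 ∨ (x.1 = a ∧ y.1 = b) ∨ (x.1 = b ∧ y.1 = a)) :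
    mdNum G ≤ mdNum G' :=
  splitOff_md_general G' a b c hN G hG
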